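/- arXiv:2306.12613 — 5 statements merged into one kernel-verified Lean document; each statement's English description precedes it below -/
import Mathlib

section
/- Let P and Q be projection matrices acting on ℂᵏ, with L = range P and N = range Q. Then dim L − dim(L ∩ N) − dim(L ∩ N^⊥) = dim L^⊥ − dim(L^⊥ ∩ N) − dim(L^⊥ ∩ N^⊥); equivalently, the subspace M₀ = orthogonal complement of (L ∩ N) ⊕ (L ∩ N^⊥) inside L and the subspace M₁ = orthogonal complement of (L^⊥ ∩ N) ⊕ (L^⊥ ∩ N^⊥) inside L^⊥ have equal dimension. -/
open Module Submodule

section Aux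

variable {E : Type*} [NormedAddCommGroup E] [InnerProductSpace ℂ E] [FiniteDimensional ℂ E]

/-- Key inequality in Halmos' dimension count, stated abstractly for symmetric
idempotent endomorphisms characterized by their fixed/kernel descriptions. -/
lemma halmos_key (p q : E →ₗ[ℂ] E) (hps : p.IsSymmetric) (hqs : q.IsSymmetric)
    (hp2 : ∀ x, p (p x) = p x) (hq2 : ∀ x, q (q x) = q x)
    (L N : Submodule ℂ E)
    (hLmem : ∀ x, x ∈ L ↔ p x = x) (hLorth : ∀ x, x ∈ Lᗮ ↔ p x = 0)
    (hNmem : ∀ x, x ∈ N ↔ q x = x) (hNorth : ∀ x, x ∈ Nᗮ ↔ q x = 0) :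
    finrank ℂ ↥(((L ⊓ N) ⊔ (L ⊓ Nᗮ))ᗮ ⊓ L) ≤
      finrank ℂ ↥(((Lᗮ ⊓ N) ⊔ (Lᗮ ⊓ Nᗮ))ᗮ ⊓ Lᗮ) := by
  set f : E →ₗ[ℂ] E := q - p ∘ₗ q with hf
  have hfx : ∀ x, f x = q x - p (q x) := fun x => rfl
  -- f maps M₀ into M₁
  have hmaps : ∀ x ∈ (((L ⊓ N) ⊔ (L ⊓ Nᗮ))ᗮ ⊓ L), f x ∈ (((Lᗮ ⊓ N) ⊔ (Lᗮ ⊓ Nᗮ))ᗮ ⊓ Lᗮ) := by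
    intro x hx
    obtain ⟨hxo, hxL⟩ := Submodule.mem_inf.mp hx
    have hfxLbot : f x ∈ Lᗮ := by
      rw [hLorth]
      simp [hfx, map_sub, hp2]
    refine Submodule.mem_inf.mpr ⟨?_, hfxLbot⟩
    rw [← Submodule.inf_orthogonal]
    refine Submodule.mem_inf.mpr ⟨?_, ?_⟩
    · rw [Submodule.mem_orthogonal]
      intro z hz
      obtain ⟨hzL, hzN⟩ := Submodule.mem_inf.mp hz
      have hpz : p z = 0 := (hLorth z).mp hzL
      have hqz : q z = z := (hNmem z).mp hzN
      have hstep : inner ℂ z (f x) = (inner ℂ z (q x) : ℂ) - inner ℂ (p z) (q x) := by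
        rw [hfx, inner_sub_right, hps]
      have hzx : (inner ℂ z x : ℂ) = 0 := by
        rw [inner_eq_zero_symm]
        exact (Submodule.mem_orthogonal L z).mp hzL x hxL
      rw [hstep, hpz, inner_zero_left, sub_zero, ← hqs z x, hqz]
      exact hzx
    · rw [Submodule.mem_orthogonal]
      intro z hz
      obtain ⟨hzL, hzN⟩ := Submodule.mem_inf.mp hz
      have hqz : q z = 0 := (hNorth z).mp hzN
      have hpz : p z = 0 := (hLorth z).mp hzL
      have hstep : inner ℂ z (f x) = (inner ℂ z (q x) : ℂ) - inner ℂ (p z) (q x) := by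
        rw [hfx, inner_sub_right, hps]
      rw [hstep, hpz, inner_zero_left, sub_zero, ← hqs z x, hqz, inner_zero_left]
  -- the restricted map is injective
  have hinj : Function.Injective (f.restrict hmaps) := by
    rw [← LinearMap.ker_eq_bot, LinearMap.ker_eq_bot']
    rintro ⟨x, hx⟩ h0
    obtain ⟨hxo, hxL⟩ := Submodule.mem_inf.mp hx
    have h0' : f x = 0 := congrArg Subtype.val h0
    have hqx : p (q x) = q x := by
      have := hfx x
      rw [h0'] at this
      exact (sub_eq_zero.mp this.symm).symm
    have hqxLN : q x ∈ (L ⊓ N) ⊔ (L ⊓ Nᗮ) :=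
      le_sup_left (α := Submodule ℂ E)
        (Submodule.mem_inf.mpr ⟨(hLmem _).mpr hqx, (hNmem _).mpr (hq2 x)⟩)
    have hqx0 : q x = 0 := by
      have h1 : (inner ℂ (q x) x : ℂ) = 0 :=
        (Submodule.mem_orthogonal _ x).mp hxo (q x) hqxLN
      have h2 : (inner ℂ (q x) (q x) : ℂ) = 0 := by
        rw [hqs x (q x), hq2]
        exact inner_eq_zero_symm.mp h1
      exact inner_self_eq_zero.mp h2
    have hxS : x ∈ (L ⊓ N) ⊔ (L ⊓ Nᗮ) :=
      le_sup_right (α := Submodule ℂ E)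
        (Submodule.mem_inf.mpr ⟨hxL, (hNorth _).mpr hqx0⟩)
    have : (inner ℂ x x : ℂ) = 0 := (Submodule.mem_orthogonal _ x).mp hxo x hxS
    exact Subtype.ext (inner_self_eq_zero.mp this)
  exact LinearMap.finrank_le_finrank_of_injective hinj

end Aux

/-- Halmos' dimension count: with L = range P and N = range Q,
dim L − dim(L∩N) − dim(L∩N^⊥) = dim L^⊥ − dim(L^⊥∩N) − dim(L^⊥∩N^⊥); equivalently,
the orthocomplement M₀ of (L∩N) ⊕ (L∩N^⊥) inside L and the orthocomplement M₁ of
(L^⊥∩N) ⊕ (L^⊥∩N^⊥) inside L^⊥ have equal dimension. -/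
theorem stmt_10 {k : ℕ} (P Q : Matrix (Fin k) (Fin k) ℂ)
    (hP : P.IsHermitian) (hP' : P * P = P)
    (hQ : Q.IsHermitian) (hQ' : Q * Q = Q)
    (L N : Submodule ℂ (EuclideanSpace ℂ (Fin k)))
    (hL : L = LinearMap.range (Matrix.toEuclideanLin P))
    (hN : N = LinearMap.range (Matrix.toEuclideanLin Q)) :
    (Module.finrank ℂ L - Module.finrank ℂ ↥(L ⊓ N) - Module.finrank ℂ ↥(L ⊓ Nᗮ) =
      Module.finrank ℂ ↥Lᗮ - Module.finrank ℂ ↥(Lᗮ ⊓ N) -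
        Module.finrank ℂ ↥(Lᗮ ⊓ Nᗮ)) ∧
    Module.finrank ℂ ↥(((L ⊓ N) ⊔ (L ⊓ Nᗮ))ᗮ ⊓ L) =
      Module.finrank ℂ ↥(((Lᗮ ⊓ N) ⊔ (Lᗮ ⊓ Nᗮ))ᗮ ⊓ Lᗮ) := by
  set p := Matrix.toEuclideanLin P with hp
  set q := Matrix.toEuclideanLin Q with hq
  have hps : p.IsSymmetric := Matrix.isHermitian_iff_isSymmetric.mp hP
  have hqs : q.IsSymmetric := Matrix.isHermitian_iff_isSymmetric.mp hQ
  have comp_eq : ∀ (A B : Matrix (Fin k) (Fin k) ℂ) x,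
      Matrix.toEuclideanLin A (Matrix.toEuclideanLin B x) = Matrix.toEuclideanLin (A * B) x := by
    intro A B x
    simp [Matrix.toEuclideanLin_apply, Matrix.mulVec_mulVec]
  have hp2 : ∀ x, p (p x) = p x := by
    intro x
    rw [hp, comp_eq, hP']
  have hq2 : ∀ x, q (q x) = q x := by
    intro x
    rw [hq, comp_eq, hQ']
  -- membership characterizations
  have memChar : ∀ (r : EuclideanSpace ℂ (Fin k) →ₗ[ℂ] EuclideanSpace ℂ (Fin k)),
      r.IsSymmetric → (∀ x, r (r x) = r x) →
      (∀ x, x ∈ LinearMap.range r ↔ r x = x) ∧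
      (∀ x, x ∈ (LinearMap.range r)ᗮ ↔ r x = 0) := by
    intro r hrs hr2
    constructor
    · intro x
      constructor
      · rintro ⟨y, rfl⟩; exact hr2 y
      · intro h; exact ⟨x, h⟩
    · intro x
      constructor
      · intro h
        have h1 : (inner ℂ (r x) x : ℂ) = 0 :=
          (Submodule.mem_orthogonal _ x).mp h (r x) ⟨x, rfl⟩
        have h2 : (inner ℂ (r x) (r x) : ℂ) = 0 := by
          rw [hrs x (r x), hr2]
          exact inner_eq_zero_symm.mp h1
        exact inner_self_eq_zero.mp h2
      · intro h
        rw [Submodule.mem_orthogonal]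
        rintro u ⟨y, rfl⟩
        rw [hrs y x, h, inner_zero_right]
  obtain ⟨hLmem', hLorth'⟩ := memChar p hps hp2
  obtain ⟨hNmem', hNorth'⟩ := memChar q hqs hq2
  have hLmem : ∀ x, x ∈ L ↔ p x = x := by rw [hL]; exact hLmem'
  have hLorth : ∀ x, x ∈ Lᗮ ↔ p x = 0 := by rw [hL]; exact hLorth'
  have hNmem : ∀ x, x ∈ N ↔ q x = x := by rw [hN]; exact hNmem'
  have hNorth : ∀ x, x ∈ Nᗮ ↔ q x = 0 := by rw [hN]; exact hNorth'
  -- complementary projection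
  set p' := LinearMap.id - p with hp'
  have hp's : p'.IsSymmetric := by
    intro x y
    simp only [hp', LinearMap.sub_apply, LinearMap.id_apply, inner_sub_left,
      inner_sub_right, hps x y]
  have hp'2 : ∀ x, p' (p' x) = p' x := by
    intro x
    simp only [hp', LinearMap.sub_apply, LinearMap.id_apply, map_sub, hp2]
    abel
  have hLL : Lᗮᗮ = L := Submodule.orthogonal_orthogonal L
  have hL'mem : ∀ x, x ∈ Lᗮ ↔ p' x = x := by
    intro x
    rw [hLorth, hp']
    simp only [LinearMap.sub_apply, LinearMap.id_apply, sub_eq_self]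
  have hL'orth : ∀ x, x ∈ Lᗮᗮ ↔ p' x = 0 := by
    intro x
    rw [hLL, hLmem, hp']
    simp only [LinearMap.sub_apply, LinearMap.id_apply, sub_eq_zero]
    exact eq_comm
  -- the two inequalities
  have key1 := halmos_key p q hps hqs hp2 hq2 L N hLmem hLorth hNmem hNorth
  have key2 := halmos_key p' q hp's hqs hp'2 hq2 Lᗮ N hL'mem hL'orth hNmem hNorth
  rw [hLL] at key2
  have part2 : Module.finrank ℂ ↥(((L ⊓ N) ⊔ (L ⊓ Nᗮ))ᗮ ⊓ L) =
      Module.finrank ℂ ↥(((Lᗮ ⊓ N) ⊔ (Lᗮ ⊓ Nᗮ))ᗮ ⊓ Lᗮ) :=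
    le_antisymm key1 key2
  refine ⟨?_, part2⟩
  -- dimension bookkeeping
  have haux : ∀ (K : Submodule ℂ (EuclideanSpace ℂ (Fin k))),
      Module.finrank ℂ K = Module.finrank ℂ ↥(K ⊓ N) + Module.finrank ℂ ↥(K ⊓ Nᗮ) +
        Module.finrank ℂ ↥(((K ⊓ N) ⊔ (K ⊓ Nᗮ))ᗮ ⊓ K) := by
    intro K
    have hbot : (K ⊓ N) ⊓ (K ⊓ Nᗮ) = ⊥ := by
      rw [eq_bot_iff]
      intro x hx
      have hxN := (Submodule.mem_inf.mp (Submodule.mem_inf.mp hx).1).2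
      have hxN' := (Submodule.mem_inf.mp (Submodule.mem_inf.mp hx).2).2
      have : x ∈ N ⊓ Nᗮ := Submodule.mem_inf.mpr ⟨hxN, hxN'⟩
      rwa [N.orthogonal_disjoint.eq_bot] at this
    have hsup := Submodule.finrank_sup_add_finrank_inf_eq (K ⊓ N) (K ⊓ Nᗮ)
    rw [hbot, finrank_bot, add_zero] at hsup
    have hle : (K ⊓ N) ⊔ (K ⊓ Nᗮ) ≤ K := sup_le inf_le_left inf_le_left
    have hdim := Submodule.finrank_add_inf_finrank_orthogonal hle
    omega
  have h1 := haux L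
  have h2 := haux Lᗮ
  omega
end

section
/- Let P and Q be k×k projection matrices and let Φ ∈ ℂ[z₀, z₁, z₂] be their characteristic polynomial, Φ(z) = det(z₀I + z₁P + z₂Q). Then Φ is a product of polynomials each of which is either a homogeneous linear polynomial or an irreducible homogeneous quadratic polynomial in z₀, z₁, z₂. -/
/-!
Put `M = z₀ I + z₁ P + z₂ Q` and `N = -(z₀ + z₁ + z₂) I + z₁ P + z₂ Q`. Idempotency of `P` and `Q`
gives `M N = -z₀ (z₀ + z₁ + z₂) I - z₁ z₂ (P - Q)²`, and diagonalizing the Hermitian matrix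
`(P - Q)²` with eigenvalues `λᵢ` yields `Φ · det N = ∏ᵢ (-z₀ (z₀ + z₁ + z₂) - λᵢ z₁ z₂)`.
Hence every prime factor of `Φ` divides a nonzero homogeneous quadratic, and a factor of a
homogeneous polynomial is homogeneous (compare leading and trailing degrees of `p(t x)` in `t`).
Prime factors of degree `0` would be units, so each one is linear or an irreducible quadratic.
-/

theorem UniqueFactorizationMonoid.exists_prime_factors_prod_eq {α : Type*}
    [CommMonoidWithZero α] [UniqueFactorizationMonoid α] {a : α} (ha : a ≠ 0)
    (hunit : IsUnit a → a = 1) : ∃ l : Multiset α, a = l.prod ∧ ∀ p ∈ l, Prime p := by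
  obtain ⟨l, hl, u, hu⟩ := exists_prime_factors a ha
  rcases Multiset.empty_or_exists_mem l with rfl | ⟨p, hp⟩
  · refine ⟨0, hunit ?_, by simp⟩
    rw [← hu, Multiset.prod_zero, one_mul]
    exact u.isUnit
  · obtain ⟨l', rfl⟩ := Multiset.exists_cons_of_mem hp
    refine ⟨(p * u) ::ₘ l', ?_, ?_⟩
    · rw [← hu, Multiset.prod_cons, Multiset.prod_cons, mul_right_comm]
    · simp only [Multiset.mem_cons]
      rintro q (rfl | hq)
      · exact (associated_mul_unit_right p u u.isUnit).prime (hl p (Multiset.mem_cons_self p l'))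
      · exact hl q (Multiset.mem_cons_of_mem hq)

theorem smul_one_add_smul_add_smul_mul_eq_of_isIdempotentElem {R A : Type*} [CommRing R] [Ring A]
    [Algebra R A] {p q : A} (hp : IsIdempotentElem p) (hq : IsIdempotentElem q) (a b c : R) :
    (a • 1 + b • p + c • q) * ((-a - b - c) • 1 + b • p + c • q) =
      (-(a * (a + b + c))) • 1 + (-(b * c)) • (p - q) ^ 2 := by
  simp only [add_mul, mul_add, sub_mul, mul_sub, sq, smul_mul_assoc, mul_smul_comm, one_mul,
    mul_one, hp.eq, hq.eq]
  module

open Matrix in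
theorem Matrix.IsHermitian.det_smul_one_add_smul_map {n 𝕜 S : Type*} [Fintype n] [DecidableEq n]
    [RCLike 𝕜] [CommRing S] {D : Matrix n n 𝕜} (hD : D.IsHermitian) (φ : 𝕜 →+* S) (e f : S) :
    det (e • 1 + f • D.map φ) = ∏ i, (e + f * φ (hD.eigenvalues i)) := by
  set U := hD.eigenvectorUnitary
  set V : Matrix n n S := (U : Matrix n n 𝕜).map φ
  set W : Matrix n n S := (star U : Matrix n n 𝕜).map φ
  have hVW : V * W = 1 := by
    rw [← Matrix.map_mul, Unitary.mul_star_self_of_mem U.2,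
      Matrix.map_one φ (map_zero φ) (map_one φ)]
  have hWV : W * V = 1 := by
    rw [← Matrix.map_mul, Unitary.coe_star_mul_self, Matrix.map_one φ (map_zero φ) (map_one φ)]
  have hdiag : diagonal (fun i => e + f * φ (hD.eigenvalues i)) =
      e • 1 + f • diagonal (fun i => φ (hD.eigenvalues i)) := by
    ext i j
    by_cases hij : i = j <;> simp [hij]
  have hconj : e • 1 + f • D.map φ = V * diagonal (fun i => e + f * φ (hD.eigenvalues i)) * W := by
    conv_lhs => rw [hD.spectral_theorem, Unitary.conjStarAlgAut_apply]
    rw [Matrix.map_mul, Matrix.map_mul, diagonal_map (map_zero φ), hdiag, Matrix.mul_add,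
      Matrix.add_mul, Matrix.mul_smul, Matrix.mul_smul, Matrix.smul_mul, Matrix.smul_mul,
      Matrix.mul_one, hVW]
    rfl
  rw [hconj, det_mul_comm, ← Matrix.mul_assoc, hWV, Matrix.one_mul, det_diagonal]

namespace MvPolynomial

section Homogeneous

variable {σ R : Type*} [CommRing R]

variable (σ R) in
/-- `p ↦ p(t • x)`, with `t` the variable of the outer polynomial ring. -/
noncomputable def scaleVars : MvPolynomial σ R →ₐ[R] Polynomial (MvPolynomial σ R) :=
  aeval fun i => Polynomial.C (X i) * Polynomial.X

theorem scaleVars_monomial (d : σ →₀ ℕ) (r : R) :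
    scaleVars σ R (monomial d r) = Polynomial.C (monomial d r) * Polynomial.X ^ d.degree := by
  simp only [scaleVars, aeval_monomial, mul_pow, ← map_pow, Finsupp.prod_mul, ← map_finsuppProd]
  rw [monomial_eq, map_mul, ← mul_assoc]
  simp only [Finsupp.prod, Finset.prod_pow_eq_pow_sum, Finsupp.degree_apply]
  rfl

theorem coeff_scaleVars (p : MvPolynomial σ R) (j : ℕ) :
    (scaleVars σ R p).coeff j = homogeneousComponent j p := by
  induction p using MvPolynomial.induction_on' with
  | monomial d r =>
    rw [scaleVars_monomial, Polynomial.coeff_C_mul_X_pow,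
      homogeneousComponent_of_mem (isHomogeneous_monomial r rfl)]
  | add p q hp hq => simp only [map_add, Polynomial.coeff_add, hp, hq]

theorem scaleVars_eq_of_isHomogeneous {p : MvPolynomial σ R} {n : ℕ} (hp : p.IsHomogeneous n) :
    scaleVars σ R p = Polynomial.C p * Polynomial.X ^ n := by
  ext j : 1
  rw [coeff_scaleVars, Polynomial.coeff_C_mul_X_pow, homogeneousComponent_of_mem hp]

theorem scaleVars_injective : Function.Injective (scaleVars σ R) := by
  refine (injective_iff_map_eq_zero _).mpr fun p hp => ?_
  rw [← sum_homogeneousComponent p]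
  exact Finset.sum_eq_zero fun j _ => by rw [← coeff_scaleVars, hp, Polynomial.coeff_zero]

theorem isHomogeneous_of_forall_coeff_scaleVars_eq_zero {p : MvPolynomial σ R} {m : ℕ}
    (h : ∀ j ≠ m, (scaleVars σ R p).coeff j = 0) : p.IsHomogeneous m := by
  rw [← sum_homogeneousComponent p]
  refine IsHomogeneous.sum _ _ _ fun j _ => ?_
  obtain rfl | hj := eq_or_ne j m
  · exact homogeneousComponent_isHomogeneous j p
  · rw [← coeff_scaleVars, h j hj]
    exact isHomogeneous_zero σ R m

/-- From `p(t x) r(t x) = q(x) tⁿ`: trailing and leading degrees in `t` add up to `n` for both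
factors, so they coincide for `p(t x)`. -/
theorem IsHomogeneous.exists_isHomogeneous_of_dvd [IsDomain R] {p q : MvPolynomial σ R} {n : ℕ}
    (hq : q.IsHomogeneous n) (hq0 : q ≠ 0) (hpq : p ∣ q) : ∃ m ≤ n, p.IsHomogeneous m := by
  obtain ⟨r, rfl⟩ := hpq
  set u := scaleVars σ R p
  set v := scaleVars σ R r
  have hu : u ≠ 0 := (map_ne_zero_iff _ scaleVars_injective).mpr (left_ne_zero_of_mul hq0)
  have hv : v ≠ 0 := (map_ne_zero_iff _ scaleVars_injective).mpr (right_ne_zero_of_mul hq0)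
  have huv : u * v = Polynomial.C (p * r) * Polynomial.X ^ n := by
    rw [← map_mul, scaleVars_eq_of_isHomogeneous hq]
  have hdeg : u.natDegree + v.natDegree = n := by
    rw [← Polynomial.natDegree_mul hu hv, huv, Polynomial.natDegree_C_mul_X_pow n _ hq0]
  have htrail : u.natTrailingDegree + v.natTrailingDegree = n := by
    rw [← Polynomial.natTrailingDegree_mul hu hv, huv, Polynomial.C_mul_X_pow_eq_monomial,
      Polynomial.natTrailingDegree_monomial hq0]
  have := u.natTrailingDegree_le_natDegree
  have := v.natTrailingDegree_le_natDegree
  refine ⟨u.natDegree, by omega, isHomogeneous_of_forall_coeff_scaleVars_eq_zero fun j hj => ?_⟩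
  change u.coeff j = 0
  obtain hlt | hgt := hj.lt_or_gt
  · exact Polynomial.coeff_eq_zero_of_lt_natTrailingDegree (by omega)
  · exact Polynomial.coeff_eq_zero_of_natDegree_lt hgt

theorem isUnit_of_isHomogeneous_zero {K : Type*} [Field K] {p : MvPolynomial σ K}
    (hp : p.IsHomogeneous 0) (hp0 : p ≠ 0) : IsUnit p := by
  have hdeg := (totalDegree_zero_iff_isHomogeneous σ).mpr hp
  refine isUnit_iff_totalDegree_of_isReduced.mpr ⟨isUnit_iff_ne_zero.mpr fun h => hp0 ?_, hdeg⟩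
  rw [totalDegree_eq_zero_iff_eq_C.mp hdeg, h, map_zero]

theorem eq_one_of_isUnit_of_eval_eq_one [IsReduced R] {p : MvPolynomial σ R} (hp : IsUnit p)
    (x : σ → R) (hx : eval x p = 1) : p = 1 := by
  obtain ⟨r, -, rfl⟩ := isUnit_iff_eq_C_of_isReduced.mp hp
  rw [eval_C] at hx
  rw [hx, map_one]

end Homogeneous

section Pencil

open Matrix

variable {n R : Type*} [Fintype n] [DecidableEq n] [CommRing R]

noncomputable def pencilQuadric (t : R) : MvPolynomial (Fin 3) R :=
  -(X 0 * (X 0 + X 1 + X 2)) + -(X 1 * X 2) * C t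

theorem isHomogeneous_pencilQuadric (t : R) : (pencilQuadric t).IsHomogeneous 2 := by
  have hX := isHomogeneous_X R (σ := Fin 3)
  exact (((hX 0).mul (((hX 0).add (hX 1)).add (hX 2))).neg).add
    ((((hX 1).mul (hX 2)).neg).mul (isHomogeneous_C _ t))

theorem pencilQuadric_ne_zero [Nontrivial R] (t : R) : pencilQuadric t ≠ 0 := by
  intro h
  simpa [pencilQuadric] using congrArg (eval ![1, 0, 0]) h

theorem eval_det_pencil (P Q : Matrix n n R) :
    eval ![1, 0, 0] (det ((X 0 : MvPolynomial (Fin 3) R) • 1 + (X 1 : MvPolynomial (Fin 3) R) •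
      P.map C + (X 2 : MvPolynomial (Fin 3) R) • Q.map C)) = 1 := by
  rw [RingHom.map_det, RingHom.mapMatrix_apply]
  refine (congrArg det ?_).trans det_one
  ext i j
  by_cases hij : i = j <;> simp [hij, one_apply]

theorem det_pencil_dvd_prod_pencilQuadric {𝕜 : Type*} [RCLike 𝕜] {P Q : Matrix n n 𝕜}
    (hP : IsIdempotentElem P) (hQ : IsIdempotentElem Q) (hD : ((P - Q) ^ 2).IsHermitian) :
    det ((X 0 : MvPolynomial (Fin 3) 𝕜) • 1 + (X 1 : MvPolynomial (Fin 3) 𝕜) • P.map C +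
      (X 2 : MvPolynomial (Fin 3) 𝕜) • Q.map C) ∣ ∏ i, pencilQuadric (hD.eigenvalues i : 𝕜) := by
  refine ⟨det ((-X 0 - X 1 - X 2 : MvPolynomial (Fin 3) 𝕜) • 1 + (X 1 : MvPolynomial (Fin 3) 𝕜) •
    P.map C + (X 2 : MvPolynomial (Fin 3) 𝕜) • Q.map C), ?_⟩
  have hp : IsIdempotentElem (P.map C : Matrix n n (MvPolynomial (Fin 3) 𝕜)) :=
    hP.map (C : 𝕜 →+* MvPolynomial (Fin 3) 𝕜).mapMatrix
  have hq : IsIdempotentElem (Q.map C : Matrix n n (MvPolynomial (Fin 3) 𝕜)) :=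
    hQ.map (C : 𝕜 →+* MvPolynomial (Fin 3) 𝕜).mapMatrix
  have hsq : (P.map C - Q.map C) ^ 2 = ((P - Q) ^ 2).map (C : 𝕜 →+* MvPolynomial (Fin 3) 𝕜) := by
    simp only [← RingHom.mapMatrix_apply, map_sub, map_pow]
  rw [← det_mul, smul_one_add_smul_add_smul_mul_eq_of_isIdempotentElem hp hq, hsq,
    hD.det_smul_one_add_smul_map]
  rfl

end Pencil

end MvPolynomial

open MvPolynomial in
/-- The characteristic polynomial Φ(z) = det(z₀I + z₁P + z₂Q) of two projections is a
product of homogeneous linear and/or irreducible homogeneous quadratic polynomials. -/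
theorem stmt_12 {k : ℕ} (P Q : Matrix (Fin k) (Fin k) ℂ)
    (hP : P.IsHermitian) (hP' : P * P = P)
    (hQ : Q.IsHermitian) (hQ' : Q * Q = Q)
    (Φ : MvPolynomial (Fin 3) ℂ)
    (hΦ : Φ = Matrix.det
        ((MvPolynomial.X 0 : MvPolynomial (Fin 3) ℂ) •
            (1 : Matrix (Fin k) (Fin k) (MvPolynomial (Fin 3) ℂ)) +
          (MvPolynomial.X 1 : MvPolynomial (Fin 3) ℂ) • P.map MvPolynomial.C +
          (MvPolynomial.X 2 : MvPolynomial (Fin 3) ℂ) • Q.map MvPolynomial.C)) :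
    ∃ l : Multiset (MvPolynomial (Fin 3) ℂ),
      Φ = l.prod ∧
      ∀ f ∈ l, f.IsHomogeneous 1 ∨ (f.IsHomogeneous 2 ∧ Irreducible f) := by
  subst hΦ
  have hD : ((P - Q) ^ 2).IsHermitian := (hP.sub hQ).pow 2
  have heval := eval_det_pencil P Q
  obtain ⟨l, hl, hprime⟩ := UniqueFactorizationMonoid.exists_prime_factors_prod_eq
    (fun h => by simp [h] at heval) fun hu => eq_one_of_isUnit_of_eval_eq_one hu _ heval
  refine ⟨l, hl, fun g hg => ?_⟩
  have hdvd := hl ▸ det_pencil_dvd_prod_pencilQuadric hP' hQ' hD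
  obtain ⟨i, -, hgi⟩ := (hprime g hg).exists_mem_finset_dvd ((Multiset.dvd_prod hg).trans hdvd)
  obtain ⟨m, hm, hgm⟩ := (isHomogeneous_pencilQuadric _).exists_isHomogeneous_of_dvd
    (pencilQuadric_ne_zero _) hgi
  interval_cases m
  · exact absurd (isUnit_of_isHomogeneous_zero hgm (hprime g hg).ne_zero) (hprime g hg).not_isUnit
  · exact Or.inl hgm
  · exact Or.inr ⟨hgm, (hprime g hg).irreducible⟩
end

section
/- Let P and Q be k×k projection matrices and let Φ ∈ ℂ[z₀, z₁, z₂] be the polynomial Φ(z) = det(z₀I + z₁P + z₂Q). Then Φ has no linear (degree-one) polynomial factor if and only if P and Q are in generic position, i.e., with L = range P and N = range Q, all four subspaces L ∩ N, L ∩ N^⊥, L^⊥ ∩ N, and L^⊥ ∩ N^⊥ are trivial. -/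
/-!
If `P v = b v` and `Q v = c v` with `v ≠ 0`, the polynomial matrix `z₀ I + z₁ P + z₂ Q` maps the
constant vector `v` to `(z₀ + b z₁ + c z₂) v`, and multiplying by the adjugate shows that
`z₀ + b z₁ + c z₂` divides `Φ`. As `P` and `Q` are projections, `b, c ∈ {0, 1}`, so `v` lies in
one of `L ∩ N`, `L ∩ N^⊥`, `L^⊥ ∩ N`, `L^⊥ ∩ N^⊥`; conversely a nonzero vector there is a common
eigenvector.

A factor `c₀ + a · z` of degree one makes `Φ` vanish on the plane `c₀ + a · z = 0`. If `a₀ = 0`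
that plane contains a line `t ↦ (t, w₁, w₂)`, along which `Φ` is a monic characteristic
polynomial. Otherwise the plane is `z₀ + b z₁ + c z₂ + d = 0`, so
`det (s (P - b) + t (Q - c) - d) = 0` for all `s, t`. The points `(0, 0), (1, 0), (0, 1)` give
`d = 0` and `b, c ∈ {0, 1}`; then `±(P - b)` and `±(Q - c)` are projections, hence positive
semidefinite, and a kernel vector of their singular sum is a kernel vector of both.
-/

open Matrix MvPolynomial WithLp
open scoped ComplexOrder

namespace MvPolynomial

variable {σ : Type*} [Fintype σ]

theorem eq_C_add_sum_C_mul_X_of_totalDegree_le_one {R : Type*} [CommSemiring R]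
    {f : MvPolynomial σ R} (hf : f.totalDegree ≤ 1) :
    f = C (coeff 0 f) + ∑ i, C (coeff (Finsupp.single i 1) f) * X i := by
  classical
  ext m
  simp only [coeff_add, coeff_C, coeff_sum, coeff_C_mul, coeff_X, mul_ite, mul_one, mul_zero]
  obtain h0 | h1 | h2 : m.degree = 0 ∨ m.degree = 1 ∨ 1 < m.degree := by omega
  · obtain rfl := (Finsupp.degree_eq_zero_iff m).mp h0
    simp
  · obtain ⟨i, rfl⟩ := (Finsupp.sum_eq_one_iff m).mp h1
    simp [Finsupp.single_eq_single_iff, eq_comm (a := (0 : σ →₀ ℕ))]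
  · have hm0 : m ≠ 0 := by rintro rfl; simp at h2
    have hmi : ∀ i, Finsupp.single i 1 ≠ m := by rintro i rfl; simp at h2
    simp [hm0.symm, hmi, coeff_eq_zero_of_totalDegree_lt (hf.trans_lt h2)]

theorem exists_eval_eq_add_dotProduct {K : Type*} [Field K] {f : MvPolynomial σ K}
    (hf : f.totalDegree = 1) : ∃ (c : K) (a : σ → K), a ≠ 0 ∧ ∀ z, eval z f = c + a ⬝ᵥ z := by
  have hrep := eq_C_add_sum_C_mul_X_of_totalDegree_le_one hf.le
  refine ⟨coeff 0 f, fun i => coeff (Finsupp.single i 1) f, fun ha => ?_, fun z => ?_⟩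
  · have hlin : ∀ i, coeff (Finsupp.single i 1) f = 0 := congrFun ha
    simp only [hlin, map_zero, zero_mul, Finset.sum_const_zero, add_zero] at hrep
    rw [hrep, totalDegree_C] at hf
    exact zero_ne_one hf
  · conv_lhs => rw [hrep]
    simp [dotProduct]

theorem totalDegree_X_add_C_mul_X_add_C_mul_X {R : Type*} [CommRing R] [Nontrivial R] (b c : R) :
    (X 0 + C b * X 1 + C c * X 2 : MvPolynomial (Fin 3) R).totalDegree = 1 := by
  apply IsHomogeneous.totalDegree
  · exact ((isHomogeneous_X R 0).add (isHomogeneous_C_mul_X _ _)).add (isHomogeneous_C_mul_X _ _)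
  · intro h
    simpa using congrArg (eval ![1, 0, 0]) h

end MvPolynomial

theorem Submodule.exists_ne_zero_mem_or_mem_iff {R M : Type*} [Ring R] [AddCommGroup M]
    [Module R M] {L L' N N' : Submodule R M} :
    (∃ x, x ≠ 0 ∧ (x ∈ L ∨ x ∈ L') ∧ (x ∈ N ∨ x ∈ N')) ↔
      L ⊓ N ≠ ⊥ ∨ L ⊓ N' ≠ ⊥ ∨ L' ⊓ N ≠ ⊥ ∨ L' ⊓ N' ≠ ⊥ := by
  simp only [Submodule.ne_bot_iff, Submodule.mem_inf]
  grind

namespace Matrix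

variable {n R K 𝕜 : Type*} [Fintype n] [CommRing R] [Field K] [RCLike 𝕜]

def HasCommonEigenvector (P Q : Matrix n n R) : Prop :=
  ∃ v ≠ 0, ∃ b c : R, P *ᵥ v = b • v ∧ Q *ᵥ v = c • v

theorem map_mulVec_comp_of_mulVec_eq_smul {S : Type*} [CommRing S] (f : R →+* S)
    {A : Matrix n n R} {v : n → R} {a : R} (h : A *ᵥ v = a • v) :
    A.map f *ᵥ (f ∘ v) = f a • (f ∘ v) := by
  ext i
  rw [← RingHom.map_mulVec, h]
  simp

theorem IsIdempotentElem.eq_zero_or_one_of_mulVec_eq_smul {P : Matrix n n K}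
    (hP : IsIdempotentElem P) {v : n → K} (hv : v ≠ 0) {b : K} (h : P *ᵥ v = b • v) :
    b = 0 ∨ b = 1 := by
  refine IsIdempotentElem.iff_eq_zero_or_one.mp (smul_left_injective K hv ?_)
  calc (b * b) • v = P *ᵥ (P *ᵥ v) := by rw [h, mulVec_smul, h, smul_smul]
    _ = b • v := by rw [mulVec_mulVec, hP.eq, h]

theorem PosSemidef.mulVec_eq_zero_of_add_mulVec_eq_zero {A B : Matrix n n 𝕜}
    (hA : A.PosSemidef) (hB : B.PosSemidef) {v : n → 𝕜} (h : (A + B) *ᵥ v = 0) :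
    A *ᵥ v = 0 := by
  have hsum : star v ⬝ᵥ A *ᵥ v + star v ⬝ᵥ B *ᵥ v = 0 := by
    rw [← dotProduct_add, ← add_mulVec, h, dotProduct_zero]
  rw [add_eq_zero_iff_of_nonneg (hA.dotProduct_mulVec_nonneg v) (hB.dotProduct_mulVec_nonneg v)]
    at hsum
  exact (hA.dotProduct_mulVec_zero_iff v).mp hsum.1

theorem IsStarProjection.posSemidef {P : Matrix n n 𝕜} (hP : IsStarProjection P) :
    P.PosSemidef := by
  have hPP := posSemidef_conjTranspose_mul_self P
  rwa [show Pᴴ = P from hP.isSelfAdjoint, hP.isIdempotentElem.eq] at hPP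

variable [DecidableEq n]

theorem exists_dotProduct_eq {a : n → K} (ha : a ≠ 0) (r : K) : ∃ w, a ⬝ᵥ w = r := by
  obtain ⟨j, hj⟩ := Function.ne_iff.mp ha
  exact ⟨Pi.single j (r / a j), by rw [dotProduct_single, mul_div_cancel₀ r hj]⟩

theorem dvd_det_of_mulVec_eq_smul {M : Matrix n n R} {w : n → R} {ℓ : R} (h : M *ᵥ w = ℓ • w)
    {i : n} (hw : IsUnit (w i)) : ℓ ∣ M.det := by
  have hdet : M.det • w = ℓ • (M.adjugate *ᵥ w) := by
    rw [← mulVec_smul, ← h, mulVec_mulVec, adjugate_mul, smul_mulVec, one_mulVec]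
  rw [← hw.dvd_mul_right, ← smul_eq_mul, ← Pi.smul_apply, hdet]
  exact dvd_mul_right _ _

theorem exists_det_smul_one_add_ne_zero [Infinite K] (M : Matrix n n K) :
    ∃ t : K, (t • 1 + M).det ≠ 0 := by
  by_contra! h
  refine (charpoly_monic (-M)).ne_zero (Polynomial.funext fun t => ?_)
  rw [eval_charpoly, Polynomial.eval_zero, ← h t, scalar_apply, sub_neg_eq_add,
    smul_one_eq_diagonal]

theorem exists_add_dotProduct_eq_zero_and_det_ne_zero [Infinite K] (P Q : Matrix n n K) {c : K}
    {a : Fin 3 → K} (ha : a ≠ 0) (ha0 : a 0 = 0) :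
    ∃ z : Fin 3 → K, c + a ⬝ᵥ z = 0 ∧ (z 0 • 1 + z 1 • P + z 2 • Q).det ≠ 0 := by
  obtain ⟨w, hw⟩ := exists_dotProduct_eq ha (-c)
  obtain ⟨t, ht⟩ := exists_det_smul_one_add_ne_zero (w 0 • 1 + w 1 • P + w 2 • Q)
  refine ⟨w + t • Pi.single 0 1, ?_, ?_⟩
  · rw [dotProduct_add, dotProduct_smul, dotProduct_single, ha0, hw]
    simp
  · convert ht using 2
    simp only [Pi.add_apply, Pi.smul_apply, Pi.single_eq_same, Pi.single_eq_of_ne, smul_eq_mul,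
      mul_one, mul_zero, add_zero, ne_eq, Fin.reduceEq, not_false_eq_true]
    module

theorem IsIdempotentElem.eq_zero_or_one_of_det_sub_smul_one_eq_zero {P : Matrix n n K}
    (hP : IsIdempotentElem P) {b : K} (h : (P - b • 1).det = 0) : b = 0 ∨ b = 1 := by
  obtain ⟨v, hv, hPv⟩ := exists_mulVec_eq_zero_iff.mpr h
  rw [sub_mulVec, smul_mulVec, one_mulVec, sub_eq_zero] at hPv
  exact hP.eq_zero_or_one_of_mulVec_eq_smul hv hPv

theorem IsStarProjection.exists_smul_sub_smul_one {P : Matrix n n 𝕜} (hP : IsStarProjection P)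
    {b : 𝕜} (hb : b = 0 ∨ b = 1) : ∃ ε ≠ (0 : 𝕜), IsStarProjection (ε • (P - b • 1)) := by
  rcases hb with rfl | rfl
  · exact ⟨1, one_ne_zero, by simpa using hP⟩
  · exact ⟨-1, by simp, by simpa using hP.one_sub⟩

theorem hasCommonEigenvector_of_det_eq_zero_on_plane {P Q : Matrix n n 𝕜}
    (hP : IsStarProjection P) (hQ : IsStarProjection Q) {b c d : 𝕜}
    (h : ∀ z : Fin 3 → 𝕜, z 0 + b * z 1 + c * z 2 + d = 0 →
      (z 0 • 1 + z 1 • P + z 2 • Q).det = 0) :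
    HasCommonEigenvector P Q := by
  have hd : d = 0 := by
    have hdet := h ![-d, 0, 0] (by simp)
    simp only [cons_val_zero, cons_val_one, cons_val, zero_smul, add_zero, det_smul, det_one,
      mul_one, pow_eq_zero_iff'] at hdet
    exact neg_eq_zero.mp hdet.1
  subst hd
  have hb : b = 0 ∨ b = 1 := hP.isIdempotentElem.eq_zero_or_one_of_det_sub_smul_one_eq_zero <| by
    simpa [sub_eq_neg_add] using h ![-b, 1, 0]
  have hc : c = 0 ∨ c = 1 := hQ.isIdempotentElem.eq_zero_or_one_of_det_sub_smul_one_eq_zero <| by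
    simpa [sub_eq_neg_add] using h ![-c, 0, 1]
  obtain ⟨ε, hε, hPε⟩ := hP.exists_smul_sub_smul_one hb
  obtain ⟨ε', hε', hQε⟩ := hQ.exists_smul_sub_smul_one hc
  have hdet : (ε • (P - b • 1) + ε' • (Q - c • 1)).det = 0 := by
    convert h ![-(b * ε + c * ε'), ε, ε'] (by simp) using 2
    simp only [cons_val_zero, cons_val_one, cons_val]
    module
  obtain ⟨v, hv, hker⟩ := exists_mulVec_eq_zero_iff.mpr hdet
  have hPv := hPε.posSemidef.mulVec_eq_zero_of_add_mulVec_eq_zero hQε.posSemidef hker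
  have hQv := hQε.posSemidef.mulVec_eq_zero_of_add_mulVec_eq_zero hPε.posSemidef
    (add_comm (ε • (P - b • 1)) _ ▸ hker)
  refine ⟨v, hv, b, c, ?_, ?_⟩
  · simpa [smul_mulVec, sub_mulVec, hε, sub_eq_zero] using hPv
  · simpa [smul_mulVec, sub_mulVec, hε', sub_eq_zero] using hQv

noncomputable def linearPencil (P Q : Matrix n n R) : Matrix n n (MvPolynomial (Fin 3) R) :=
  (X 0 : MvPolynomial (Fin 3) R) • (1 : Matrix n n (MvPolynomial (Fin 3) R)) +
    (X 1 : MvPolynomial (Fin 3) R) • P.map C + (X 2 : MvPolynomial (Fin 3) R) • Q.map C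

theorem eval_det_linearPencil (P Q : Matrix n n R) (z : Fin 3 → R) :
    eval z (linearPencil P Q).det = (z 0 • 1 + z 1 • P + z 2 • Q).det := by
  rw [RingHom.map_det]
  congr 1
  ext i j
  by_cases hij : i = j <;> simp [linearPencil, hij]

theorem linearPencil_mulVec_of_eigenvector {P Q : Matrix n n R} {v : n → R} {b c : R}
    (hP : P *ᵥ v = b • v) (hQ : Q *ᵥ v = c • v) :
    linearPencil P Q *ᵥ (C ∘ v) =
      (X 0 + C b * X 1 + C c * X 2 : MvPolynomial (Fin 3) R) • (C ∘ v) := by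
  simp only [linearPencil, add_mulVec, smul_mulVec, one_mulVec,
    map_mulVec_comp_of_mulVec_eq_smul C hP, map_mulVec_comp_of_mulVec_eq_smul C hQ,
    add_smul, mul_smul, smul_comm (C _) (X _)]

theorem linear_dvd_det_linearPencil {P Q : Matrix n n K} {v : n → K} (hv : v ≠ 0) {b c : K}
    (hP : P *ᵥ v = b • v) (hQ : Q *ᵥ v = c • v) :
    (X 0 + C b * X 1 + C c * X 2 : MvPolynomial (Fin 3) K) ∣ (linearPencil P Q).det := by
  obtain ⟨i, hi⟩ := Function.ne_iff.mp hv
  exact dvd_det_of_mulVec_eq_smul (linearPencil_mulVec_of_eigenvector hP hQ)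
    (i := i) ((isUnit_iff_ne_zero.mpr hi).map C)

theorem hasCommonEigenvector_of_dvd_det_linearPencil {P Q : Matrix n n 𝕜}
    (hP : IsStarProjection P) (hQ : IsStarProjection Q) {f : MvPolynomial (Fin 3) 𝕜}
    (hf : f.totalDegree = 1) (hdvd : f ∣ (linearPencil P Q).det) :
    HasCommonEigenvector P Q := by
  obtain ⟨c, a, ha, hfa⟩ := exists_eval_eq_add_dotProduct hf
  have hzero : ∀ z, c + a ⬝ᵥ z = 0 → (z 0 • 1 + z 1 • P + z 2 • Q).det = 0 := by
    intro z hz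
    obtain ⟨g, hg⟩ := hdvd
    rw [← eval_det_linearPencil, hg, map_mul, hfa, hz, zero_mul]
  by_cases ha0 : a 0 = 0
  · obtain ⟨z, hz, hdet⟩ := exists_add_dotProduct_eq_zero_and_det_ne_zero P Q (c := c) ha ha0
    exact absurd (hzero z hz) hdet
  · refine hasCommonEigenvector_of_det_eq_zero_on_plane hP hQ (b := a 1 / a 0) (c := a 2 / a 0)
      (d := c / a 0) fun z hz => hzero z ?_
    rw [dotProduct, Fin.sum_univ_three]
    field_simp at hz
    linear_combination hz

theorem exists_totalDegree_eq_one_dvd_det_linearPencil_iff {P Q : Matrix n n 𝕜}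
    (hP : IsStarProjection P) (hQ : IsStarProjection Q) :
    (∃ f : MvPolynomial (Fin 3) 𝕜, f.totalDegree = 1 ∧ f ∣ (linearPencil P Q).det) ↔
      HasCommonEigenvector P Q := by
  refine ⟨fun ⟨f, hf, hdvd⟩ => hasCommonEigenvector_of_dvd_det_linearPencil hP hQ hf hdvd, ?_⟩
  rintro ⟨v, hv, b, c, hPv, hQv⟩
  exact ⟨_, totalDegree_X_add_C_mul_X_add_C_mul_X b c, linear_dvd_det_linearPencil hv hPv hQv⟩

theorem mem_range_toEuclideanLin_iff {P : Matrix n n 𝕜} (hP : IsIdempotentElem P)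
    (x : EuclideanSpace 𝕜 n) :
    x ∈ LinearMap.range (toEuclideanLin P) ↔ P *ᵥ ofLp x = ofLp x := by
  constructor
  · rintro ⟨y, rfl⟩
    simp [toLpLin_apply, mulVec_mulVec, hP.eq]
  · intro h
    exact ⟨x, by rw [toLpLin_apply, h, toLp_ofLp]⟩

theorem mem_orthogonal_range_toEuclideanLin_iff {P : Matrix n n 𝕜} (hP : P.IsHermitian)
    (x : EuclideanSpace 𝕜 n) :
    x ∈ (LinearMap.range (toEuclideanLin P))ᗮ ↔ P *ᵥ ofLp x = 0 := by
  rw [(isSymmetric_toEuclideanLin_iff.mpr hP).orthogonal_range, LinearMap.mem_ker, toLpLin_apply,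
    toLp_eq_zero]

theorem IsStarProjection.exists_mulVec_eq_smul_iff {P : Matrix n n 𝕜} (hP : IsStarProjection P)
    {x : EuclideanSpace 𝕜 n} (hx : x ≠ 0) :
    (∃ b : 𝕜, P *ᵥ ofLp x = b • ofLp x) ↔
      x ∈ LinearMap.range (toEuclideanLin P) ∨ x ∈ (LinearMap.range (toEuclideanLin P))ᗮ := by
  rw [mem_range_toEuclideanLin_iff hP.isIdempotentElem,
    mem_orthogonal_range_toEuclideanLin_iff hP.isSelfAdjoint]
  constructor
  · rintro ⟨b, hb⟩
    rcases hP.isIdempotentElem.eq_zero_or_one_of_mulVec_eq_smul (by simpa using hx) hb with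
      rfl | rfl
    · exact Or.inr (by simpa using hb)
    · exact Or.inl (by simpa using hb)
  · rintro (h | h)
    · exact ⟨1, by simpa using h⟩
    · exact ⟨0, by simpa using h⟩

theorem hasCommonEigenvector_iff_exists_mem {P Q : Matrix n n 𝕜} (hP : IsStarProjection P)
    (hQ : IsStarProjection Q) :
    HasCommonEigenvector P Q ↔ ∃ x : EuclideanSpace 𝕜 n, x ≠ 0 ∧
      (x ∈ LinearMap.range (toEuclideanLin P) ∨ x ∈ (LinearMap.range (toEuclideanLin P))ᗮ) ∧
      (x ∈ LinearMap.range (toEuclideanLin Q) ∨ x ∈ (LinearMap.range (toEuclideanLin Q))ᗮ) := by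
  constructor
  · rintro ⟨v, hv, b, c, hPv, hQv⟩
    have hx : toLp 2 v ≠ 0 := by simpa using hv
    exact ⟨toLp 2 v, hx, (hP.exists_mulVec_eq_smul_iff hx).mp ⟨b, hPv⟩,
      (hQ.exists_mulVec_eq_smul_iff hx).mp ⟨c, hQv⟩⟩
  · rintro ⟨x, hx, hxP, hxQ⟩
    obtain ⟨b, hPx⟩ := (hP.exists_mulVec_eq_smul_iff hx).mpr hxP
    obtain ⟨c, hQx⟩ := (hQ.exists_mulVec_eq_smul_iff hx).mpr hxQ
    exact ⟨ofLp x, by simpa using hx, b, c, hPx, hQx⟩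

end Matrix

/-- Φ(z) = det(z₀I + z₁P + z₂Q) has no degree-one polynomial factor if and only if
the projections P and Q are in generic position. -/
theorem stmt_13 {k : ℕ} (P Q : Matrix (Fin k) (Fin k) ℂ)
    (hP : P.IsHermitian) (hP' : P * P = P)
    (hQ : Q.IsHermitian) (hQ' : Q * Q = Q)
    (L N : Submodule ℂ (EuclideanSpace ℂ (Fin k)))
    (hL : L = LinearMap.range (Matrix.toEuclideanLin P))
    (hN : N = LinearMap.range (Matrix.toEuclideanLin Q))
    (Φ : MvPolynomial (Fin 3) ℂ)
    (hΦ : Φ = Matrix.det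
        ((MvPolynomial.X 0 : MvPolynomial (Fin 3) ℂ) •
            (1 : Matrix (Fin k) (Fin k) (MvPolynomial (Fin 3) ℂ)) +
          (MvPolynomial.X 1 : MvPolynomial (Fin 3) ℂ) • P.map MvPolynomial.C +
          (MvPolynomial.X 2 : MvPolynomial (Fin 3) ℂ) • Q.map MvPolynomial.C)) :
    (¬ ∃ f g : MvPolynomial (Fin 3) ℂ, f.totalDegree = 1 ∧ Φ = f * g) ↔
      (L ⊓ N = ⊥ ∧ L ⊓ Nᗮ = ⊥ ∧ Lᗮ ⊓ N = ⊥ ∧ Lᗮ ⊓ Nᗮ = ⊥) := by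
  subst hL hN hΦ
  have hfactor := exists_totalDegree_eq_one_dvd_det_linearPencil_iff ⟨hP', hP⟩ ⟨hQ', hQ⟩
  have hgeneric := hasCommonEigenvector_iff_exists_mem ⟨hP', hP⟩ ⟨hQ', hQ⟩
  rw [Submodule.exists_ne_zero_mem_or_mem_iff] at hgeneric
  simp only [exists_and_left, ← dvd_def]
  rw [← not_iff_not, not_not, not_and_or, not_and_or, not_and_or]
  exact hfactor.trans hgeneric
end

section
/- For every real number x with 0 < x < 1, the polynomial z₀² + z₀(z₁ + z₂) + x·z₁z₂ is irreducible in the polynomial ring ℂ[z₀, z₁, z₂]. -/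
open MvPolynomial

noncomputable def psi (i : Fin 2) : MvPolynomial (Fin 2) ℂ →ₐ[ℂ] MvPolynomial (Fin 2) ℂ :=
  aeval (Function.update X i 0)

lemma psi_X_self (i : Fin 2) : psi i (X i) = 0 := by
  simp [psi, aeval_X]

lemma psi_X_ne (i j : Fin 2) (h : j ≠ i) : psi i (X j) = X j := by
  simp [psi, aeval_X, Function.update_of_ne h]

lemma X_dvd_sub_psi (i : Fin 2) (a : MvPolynomial (Fin 2) ℂ) :
    X i ∣ a - psi i a := by
    induction a using MvPolynomial.induction_on with
    | C r => simp [psi, aeval_C]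
    | add p q hp hq =>
        have : p + q - psi i (p + q) = (p - psi i p) + (q - psi i q) := by
          rw [map_add]; ring
        rw [this]; exact dvd_add hp hq
    | mul_X p j hp =>
        rw [map_mul]
        by_cases hj : j = i
        · subst hj
          rw [psi_X_self, mul_zero, sub_zero]
          exact Dvd.dvd.mul_left (dvd_refl _) p
        · rw [psi_X_ne i j hj]
          have : p * X j - psi i p * X j = (p - psi i p) * X j := by ring
          rw [this]
          exact Dvd.dvd.mul_right hp _

lemma X_dvd_of_psi_eq_zero (i : Fin 2) (a : MvPolynomial (Fin 2) ℂ)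
    (h : psi i a = 0) : X i ∣ a := by
  have key := X_dvd_sub_psi i a
  rw [h, sub_zero] at key
  exact key

lemma not_isUnit_X1 : ¬ IsUnit (X 1 : MvPolynomial (Fin 2) ℂ) := by
  intro h
  have := h.map (constantCoeff (σ := Fin 2) (R := ℂ))
  rw [constantCoeff_X] at this
  exact zero_ne_one (isUnit_zero_iff.mp this)

lemma X0_mul_X1_ne_zero : (X 0 * X 1 : MvPolynomial (Fin 2) ℂ) ≠ 0 :=
  mul_ne_zero (X_ne_zero 0) (X_ne_zero 1)

lemma key (c : ℂ) (hc0 : c ≠ 0) (hc1 : c ≠ 1) (a b : MvPolynomial (Fin 2) ℂ)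
    (hm : C c * X 0 * X 1 = a * b) (hs : X 0 + X 1 = a + b) (ha : X 1 ∣ a) :
    False := by
  have hprod : psi 0 a * psi 0 b = 0 := by
    rw [← map_mul, ← hm, map_mul, map_mul, psi_X_self]
    ring
  obtain ⟨t, rfl⟩ := ha
  rcases mul_eq_zero.mp hprod with h | h
  · -- X 0 also divides a = X 1 * t
    rw [map_mul, psi_X_ne 0 1 (by decide)] at h
    have ht : psi 0 t = 0 := by
      rcases mul_eq_zero.mp h with h' | h'
      · exact absurd h' (X_ne_zero 1)
      · exact h'
    obtain ⟨d, rfl⟩ := X_dvd_of_psi_eq_zero 0 t ht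
    have hcancel : C c = d * b := by
      apply mul_left_cancel₀ X0_mul_X1_ne_zero
      calc X 0 * X 1 * C c = C c * X 0 * X 1 := by ring
        _ = X 1 * (X 0 * d) * b := hm
        _ = X 0 * X 1 * (d * b) := by ring
    have hCc : IsUnit (C c : MvPolynomial (Fin 2) ℂ) :=
      IsUnit.of_mul_eq_one (a := C c) (C c⁻¹) (by
        rw [← C_mul, mul_inv_cancel₀ hc0, C_1])
    have hb : IsUnit b := isUnit_of_mul_isUnit_right (hcancel ▸ hCc)
    have hpsib : psi 0 b = X 1 := by
      have := congrArg (psi 0) hs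
      rw [map_add, map_add, psi_X_self, psi_X_ne 0 1 (by decide), map_mul, map_mul,
        psi_X_ne 0 1 (by decide)] at this
      rw [psi_X_self, zero_mul, mul_zero, zero_add, zero_add] at this
      exact this.symm
    exact not_isUnit_X1 (hpsib ▸ hb.map (psi 0))
  · -- X 0 divides b
    obtain ⟨b', rfl⟩ := X_dvd_of_psi_eq_zero 0 b h
    have hcancel : t * b' = C c := by
      apply mul_left_cancel₀ X0_mul_X1_ne_zero
      calc X 0 * X 1 * (t * b') = X 1 * t * (X 0 * b') := by ring
        _ = C c * X 0 * X 1 := hm.symm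
        _ = X 0 * X 1 * C c := by ring
    have h0 : coeff (Finsupp.single 0 1) (X 0 + X 1 : MvPolynomial (Fin 2) ℂ)
        = coeff (Finsupp.single 0 1) (X 1 * t + X 0 * b') := by rw [hs]
    have h1 : coeff (Finsupp.single 1 1) (X 0 + X 1 : MvPolynomial (Fin 2) ℂ)
        = coeff (Finsupp.single 1 1) (X 1 * t + X 0 * b') := by rw [hs]
    classical
    rw [coeff_add, coeff_add, coeff_X_same, coeff_X' 1, if_neg (by simp [Finsupp.single_eq_single_iff]),
      coeff_X_mul' _ 1 t, if_neg (by simp), coeff_X_mul' _ 0 b',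
      if_pos (by simp), zero_add, add_zero] at h0
    rw [coeff_add, coeff_add, coeff_X_same, coeff_X' 0, if_neg (by simp [Finsupp.single_eq_single_iff]),
      coeff_X_mul' _ 1 t, if_pos (by simp), coeff_X_mul' _ 0 b',
      if_neg (by simp), add_zero, zero_add] at h1
    simp only [tsub_self] at h0 h1
    have hcc := congrArg constantCoeff hcancel
    rw [map_mul, constantCoeff_C] at hcc
    have e0 : constantCoeff b' = 1 := by
      rw [constantCoeff_eq]; exact h0.symm
    have e1 : constantCoeff t = 1 := by
      rw [constantCoeff_eq]; exact h1.symm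
    rw [e0, e1, mul_one] at hcc
    exact hc1 hcc.symm

/-- For 0 < x < 1, the polynomial z₀² + z₀(z₁+z₂) + x·z₁z₂ is irreducible
in ℂ[z₀, z₁, z₂]. -/
theorem stmt_15 (x : ℝ) (hx0 : 0 < x) (hx1 : x < 1) :
    Irreducible
      ((MvPolynomial.X 0) ^ 2 +
          (MvPolynomial.X 0) * ((MvPolynomial.X 1) + (MvPolynomial.X 2)) +
          MvPolynomial.C (x : ℂ) * (MvPolynomial.X 1) * (MvPolynomial.X 2) :
        MvPolynomial (Fin 3) ℂ) := by
  have hc0 : (x : ℂ) ≠ 0 := Complex.ofReal_ne_zero.mpr hx0.ne'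
  have hc1 : (x : ℂ) ≠ 1 := by
    intro h
    exact hx1.ne (by exact_mod_cast h)
  set e := MvPolynomial.finSuccEquiv ℂ 2 with he
  rw [← MulEquiv.irreducible_iff e]
  have h1 : (1 : Fin 3) = Fin.succ 0 := rfl
  have h2 : (2 : Fin 3) = Fin.succ 1 := rfl
  have himg : e ((MvPolynomial.X 0) ^ 2 +
      (MvPolynomial.X 0) * ((MvPolynomial.X 1) + (MvPolynomial.X 2)) +
      MvPolynomial.C (x : ℂ) * (MvPolynomial.X 1) * (MvPolynomial.X 2)) =
      Polynomial.X ^ 2 + (Polynomial.C (X 0 + X 1) * Polynomial.X +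
        Polynomial.C (C (x : ℂ) * X 0 * X 1)) := by
    have hC : (MvPolynomial.finSuccEquiv ℂ 2) (C (x : ℂ)) = Polynomial.C (C (x : ℂ)) := by
      simp [MvPolynomial.finSuccEquiv_apply]
    rw [h1, h2]
    simp only [map_add, map_mul, map_pow, he, finSuccEquiv_X_zero, finSuccEquiv_X_succ, hC]
    ring
  rw [himg]
  set q : Polynomial (MvPolynomial (Fin 2) ℂ) :=
    Polynomial.X ^ 2 + (Polynomial.C (X 0 + X 1) * Polynomial.X +
      Polynomial.C (C (x : ℂ) * X 0 * X 1)) with hq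
  have hdeglt : (Polynomial.C (X 0 + X 1) * Polynomial.X +
      Polynomial.C (C (x : ℂ) * X 0 * X 1) :
      Polynomial (MvPolynomial (Fin 2) ℂ)).degree < 2 := by
    apply lt_of_le_of_lt (Polynomial.degree_add_le _ _)
    apply max_lt
    · exact lt_of_le_of_lt (Polynomial.degree_C_mul_X_le _) (by norm_num)
    · exact lt_of_le_of_lt Polynomial.degree_C_le (by norm_num)
  have hmonic : q.Monic := Polynomial.monic_X_pow_add hdeglt
  have hdeg : q.natDegree = 2 := by
    have : q.degree = 2 := by
      rw [hq, Polynomial.degree_add_eq_left_of_degree_lt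
        (by rwa [Polynomial.degree_X_pow]), Polynomial.degree_X_pow]
      rfl
    exact Polynomial.natDegree_eq_of_degree_eq_some this
  by_contra hni
  obtain ⟨c₁, c₂, hmul, hadd⟩ :=
    (hmonic.not_irreducible_iff_exists_add_mul_eq_coeff hdeg).mp hni
  have hc0' : q.coeff 0 = C (x : ℂ) * X 0 * X 1 := by
    simp [hq, Polynomial.coeff_X_pow]
  have hc1' : q.coeff 1 = X 0 + X 1 := by
    simp [hq, Polynomial.coeff_X_pow]
  rw [hc0'] at hmul
  rw [hc1'] at hadd
  have hprod : psi 1 c₁ * psi 1 c₂ = 0 := by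
    rw [← map_mul, ← hmul, map_mul, map_mul, psi_X_self, mul_zero]
  rcases mul_eq_zero.mp hprod with h | h
  · exact key (x : ℂ) hc0 hc1 c₁ c₂ hmul hadd (X_dvd_of_psi_eq_zero 1 c₁ h)
  · exact key (x : ℂ) hc0 hc1 c₂ c₁ (by rw [hmul]; ring) (by rw [hadd]; ring)
      (X_dvd_of_psi_eq_zero 1 c₂ h)
end

section
/- Let M = (m_{ij}) and M' = (m'_{ij}) be n×n Coxeter matrices with respective Tits representation matrices G_i and G'_i, where (G_k)_{ij} = δ_{ij} + 2α_{kj}δ_{ik}, α_{ij} = cos(π/m_{ij}) (α_{ij} = 1 if m_{ij} = ∞), and similarly for G'_k. If det(z₀I + z₁G₁ + ⋯ + zₙGₙ) = det(z₀I + z₁G'₁ + ⋯ + zₙG'ₙ) for all (z₀,…,zₙ) ∈ ℂⁿ⁺¹, then M = M'; consequently the two Coxeter systems are isomorphic. -/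
lemma cox_toNat {a : ℕ} (hm : (2:ℕ∞) ≤ (a:ℕ∞)) : 2 ≤ a := by
  rw [show (2:ℕ∞) = ((2:ℕ):ℕ∞) from rfl] at hm
  exact_mod_cast hm

lemma cox_angle_mem {a : ℕ} (ha : 2 ≤ a) :
    Real.pi / (a:ℝ) ∈ Set.Icc 0 Real.pi ∧ 0 < Real.pi / (a:ℝ) ∧ Real.pi / (a:ℝ) ≤ Real.pi / 2 := by
  have ha' : (2:ℝ) ≤ a := by exact_mod_cast ha
  have h0 : 0 < (a:ℝ) := by linarith
  have hpi := Real.pi_pos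
  have h2 : Real.pi / (a:ℝ) ≤ Real.pi / 2 := by
    apply div_le_div_of_nonneg_left (le_of_lt hpi) (by norm_num) ha'
  refine ⟨⟨by positivity, ?_⟩, by positivity, h2⟩
  linarith [h2, Real.pi_pos]

lemma cox_val_nonneg {m : ℕ∞} (hm : 2 ≤ m) :
    0 ≤ (if m = ⊤ then (1:ℝ) else Real.cos (Real.pi / (m.toNat : ℝ))) := by
  split_ifs with ht
  · norm_num
  · lift m to ℕ using ht with a
    have ha := cox_toNat hm
    simp only [ENat.toNat_coe]
    obtain ⟨h1, h2, h3⟩ := cox_angle_mem ha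
    apply Real.cos_nonneg_of_mem_Icc
    constructor <;> [linarith [Real.pi_pos, h2]; linarith]

lemma cox_val_lt_one {m : ℕ∞} (hm : 2 ≤ m) (ht : m ≠ ⊤) :
    Real.cos (Real.pi / (m.toNat : ℝ)) < 1 := by
  lift m to ℕ using ht with a
  have ha := cox_toNat hm
  simp only [ENat.toNat_coe]
  obtain ⟨h1, h2, h3⟩ := cox_angle_mem ha
  calc Real.cos (Real.pi / (a:ℝ)) < Real.cos 0 :=
        Real.strictAntiOn_cos ⟨le_rfl, le_of_lt Real.pi_pos⟩ h1 h2
    _ = 1 := Real.cos_zero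

lemma cox_val_inj {m m' : ℕ∞} (hm : 2 ≤ m) (hm' : 2 ≤ m')
    (h : (if m = ⊤ then (1:ℝ) else Real.cos (Real.pi / (m.toNat : ℝ))) =
         (if m' = ⊤ then (1:ℝ) else Real.cos (Real.pi / (m'.toNat : ℝ)))) : m = m' := by
  split_ifs at h with h1 h2 h2
  · rw [h1, h2]
  · exact absurd h.symm (ne_of_lt (cox_val_lt_one hm' h2))
  · exact absurd h (ne_of_lt (cox_val_lt_one hm h1))
  · lift m to ℕ using h1 with a
    lift m' to ℕ using h2 with b
    have ha := cox_toNat hm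
    have hb := cox_toNat hm'
    simp only [ENat.toNat_coe] at h
    obtain ⟨h1a, h2a, h3a⟩ := cox_angle_mem ha
    obtain ⟨h1b, h2b, h3b⟩ := cox_angle_mem hb
    have := Real.injOn_cos h1a h1b h
    have hab : (a:ℝ) = (b:ℝ) := by
      field_simp at this
      exact this.symm
    congr 1
    exact_mod_cast hab

open Matrix in
lemma cox_det {n : ℕ} (β : Fin n → Fin n → ℝ) (G : Fin n → Matrix (Fin n) (Fin n) ℂ)
    (hG : ∀ k i j, G k i j =
      (if i = j then (1 : ℂ) else 0) + 2 * (β k j : ℂ) * (if k = i then 1 else 0))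
    (k l : Fin n) :
    ((-1 : ℂ) • (1 : Matrix (Fin n) (Fin n) ℂ) + (G k + G l)).det =
      (1 + 2 * (β k k : ℂ)) * (1 + 2 * (β l l : ℂ)) - 4 * (β k l : ℂ) * (β l k : ℂ) := by
  set U : Matrix (Fin n) (Fin 2) ℂ :=
    fun i => ![if k = i then 1 else 0, if l = i then 1 else 0] with hU
  set W : Matrix (Fin 2) (Fin n) ℂ :=
    fun a => if a = 0 then (fun j => 2 * (β k j : ℂ)) else (fun j => 2 * (β l j : ℂ)) with hW
  have key : (-1 : ℂ) • (1 : Matrix (Fin n) (Fin n) ℂ) + (G k + G l) = 1 + U * W := by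
    ext i j
    simp only [Matrix.add_apply, Matrix.mul_apply]
    simp only [Matrix.add_apply, Matrix.smul_apply, Matrix.one_apply, Matrix.mul_apply,
      hG, hU, hW, Fin.sum_univ_two, smul_eq_mul, Matrix.cons_val_zero, Matrix.cons_val_one,
      Matrix.head_cons, if_pos rfl]
    norm_num
    split_ifs <;> ring
  rw [key, Matrix.det_one_add_mul_comm]
  have hWU : W * U = Matrix.of ![![2 * (β k k : ℂ), 2 * (β k l : ℂ)],
      ![2 * (β l k : ℂ), 2 * (β l l : ℂ)]] := by
    ext a j
    rw [Matrix.mul_apply]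
    fin_cases a <;> fin_cases j <;>
      simp [hU, hW, Matrix.mul_apply, mul_ite, Finset.sum_ite_eq]
  rw [hWU, Matrix.det_fin_two]
  simp only [Matrix.add_apply, Matrix.one_apply, Matrix.of_apply, Matrix.cons_val_zero,
    Matrix.cons_val_one, Matrix.head_cons, Matrix.head_fin_const]
  norm_num
  ring

/-- A Coxeter matrix (hence a Coxeter system, up to isomorphism) is uniquely determined
by the characteristic polynomial of its Tits representation generators. -/
theorem stmt_18 {n : ℕ} (M M' : Matrix (Fin n) (Fin n) ℕ∞)
    (hsymm : ∀ i j, M i j = M j i)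
    (hdiag : ∀ i, M i i = 1)
    (hoff : ∀ i j, i ≠ j → 2 ≤ M i j)
    (hsymm' : ∀ i j, M' i j = M' j i)
    (hdiag' : ∀ i, M' i i = 1)
    (hoff' : ∀ i j, i ≠ j → 2 ≤ M' i j)
    (α α' : Fin n → Fin n → ℝ)
    (hα : ∀ i j, α i j =
      if M i j = ⊤ then 1 else Real.cos (Real.pi / ((M i j).toNat : ℝ)))
    (hα' : ∀ i j, α' i j =
      if M' i j = ⊤ then 1 else Real.cos (Real.pi / ((M' i j).toNat : ℝ)))
    (G G' : Fin n → Matrix (Fin n) (Fin n) ℂ)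
    (hG : ∀ k i j, G k i j =
      (if i = j then (1 : ℂ) else 0) + 2 * (α k j : ℂ) * (if k = i then 1 else 0))
    (hG' : ∀ k i j, G' k i j =
      (if i = j then (1 : ℂ) else 0) + 2 * (α' k j : ℂ) * (if k = i then 1 else 0))
    (h : ∀ (z₀ : ℂ) (z' : Fin n → ℂ),
      (z₀ • (1 : Matrix (Fin n) (Fin n) ℂ) + ∑ i, z' i • G i).det =
        (z₀ • (1 : Matrix (Fin n) (Fin n) ℂ) + ∑ i, z' i • G' i).det) :
    M = M' := by
  -- diagonal values of α and α' are -1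
  have hdval : ∀ (N : Matrix (Fin n) (Fin n) ℕ∞), (∀ i, N i i = 1) → ∀ i,
      (if N i i = ⊤ then (1:ℝ) else Real.cos (Real.pi / ((N i i).toNat : ℝ))) = -1 := by
    intro N hN i
    rw [hN i]
    norm_num
  ext k l
  by_cases hkl : k = l
  · subst hkl
    rw [hdiag, hdiag']
  -- plug in z₀ = -1, z' = indicator of {k, l}
  set z : Fin n → ℂ := fun i => (if i = k then 1 else 0) + (if i = l then 1 else 0) with hz
  have hsum : ∀ (H : Fin n → Matrix (Fin n) (Fin n) ℂ), ∑ i, z i • H i = H k + H l := by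
    intro H
    simp only [hz, add_smul, ite_smul, one_smul, zero_smul, Finset.sum_add_distrib,
      Finset.sum_ite_eq', Finset.mem_univ, if_true]
  have key := h (-1) z
  rw [hsum G, hsum G', cox_det α G hG k l, cox_det α' G' hG' k l] at key
  have hkk : α k k = -1 := by rw [hα]; exact hdval M hdiag k
  have hll : α l l = -1 := by rw [hα]; exact hdval M hdiag l
  have hkk' : α' k k = -1 := by rw [hα']; exact hdval M' hdiag' k
  have hll' : α' l l = -1 := by rw [hα']; exact hdval M' hdiag' l
  rw [hkk, hll, hkk', hll'] at key
  have hC : ((α k l * α l k : ℝ) : ℂ) = ((α' k l * α' l k : ℝ) : ℂ) := by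
    push_cast
    push_cast at key
    linear_combination (-(1:ℂ)/4) * key
  have hR : α k l * α l k = α' k l * α' l k := Complex.ofReal_inj.mp hC
  have hsym1 : α l k = α k l := by rw [hα, hα, hsymm l k]
  have hsym1' : α' l k = α' k l := by rw [hα', hα', hsymm' l k]
  rw [hsym1, hsym1'] at hR
  have h2 : 2 ≤ M k l := hoff k l hkl
  have h2' : 2 ≤ M' k l := hoff' k l hkl
  have hnn : 0 ≤ α k l := by rw [hα]; exact cox_val_nonneg h2
  have hnn' : 0 ≤ α' k l := by rw [hα']; exact cox_val_nonneg h2'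
  have heq : α k l = α' k l := by
    have hfac : (α k l - α' k l) * (α k l + α' k l) = 0 := by linear_combination hR
    rcases mul_eq_zero.mp hfac with h' | h'
    · linarith
    · linarith
  apply cox_val_inj h2 h2'
  rw [← hα, ← hα']
  exact heq
end
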